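/- arXiv:2411.13522 — 6 statements merged into one kernel-verified Lean document; each statement's English description precedes it below -/
import Mathlib

section
/- Let R be a local ring with maximal ideal m, I a proper ideal of finite index, and k ≥ 0. Then the number of primitive k-tuples in R/I equals [R:I]^k · (1 - 1/[R:m]^k). -/
/-!
In a local ring `S`, a tuple generates the unit ideal exactly when one of its entries lies
outside the maximal ideal `𝔪`, so the non-primitive `k`-tuples are the elements of `𝔪^k`.
Hence there are `|S|^k - |𝔪|^k` primitive ones, and `|S| = [S:𝔪] |𝔪|` by Lagrange.
Applied to the local ring `R ⧸ I`, whose residue field is that of `R`, this gives the formula.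
-/

open IsLocalRing

section LocalRing

variable {S : Type*} [CommRing S] [IsLocalRing S]

theorem IsLocalRing.span_range_ne_top_iff {ι : Type*} (a : ι → S) :
    Ideal.span (Set.range a) ≠ ⊤ ↔ ∀ i, a i ∈ maximalIdeal S := by
  rw [← (Ideal.span_le.trans Set.range_subset_iff : _ ↔ ∀ i, a i ∈ maximalIdeal S)]
  exact ⟨le_maximalIdeal, fun h => ne_top_of_le_ne_top (maximalIdeal.isMaximal S).ne_top h⟩

theorem IsLocalRing.card_primitive_add_card_maximalIdeal_pow [Finite S] (ι : Type*) [Finite ι] :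
    Nat.card {a : ι → S // Ideal.span (Set.range a) = ⊤} +
        Nat.card (maximalIdeal S) ^ Nat.card ι =
      Nat.card S ^ Nat.card ι := by
  have nonprimitive : {a : ι → S // ¬Ideal.span (Set.range a) = ⊤} ≃ (ι → maximalIdeal S) :=
    (Equiv.subtypeEquivRight fun a => span_range_ne_top_iff a).trans Equiv.subtypePiEquivPi
  rw [← Nat.card_fun, ← Nat.card_fun, ← Nat.card_congr nonprimitive, ← Nat.card_sum]
  exact Nat.card_congr (Equiv.sumCompl _)

theorem IsLocalRing.card_primitive_eq [Finite S] (ι : Type*) [Finite ι] :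
    (Nat.card {a : ι → S // Ideal.span (Set.range a) = ⊤} : ℚ) =
      (Nat.card S : ℚ) ^ Nat.card ι *
        (1 - 1 / (Nat.card (S ⧸ maximalIdeal S) : ℚ) ^ Nat.card ι) := by
  have count : (Nat.card {a : ι → S // Ideal.span (Set.range a) = ⊤} : ℚ) =
      Nat.card S ^ Nat.card ι - Nat.card (maximalIdeal S) ^ Nat.card ι := by
    rw [eq_sub_iff_add_eq]
    exact_mod_cast card_primitive_add_card_maximalIdeal_pow ι
  have lagrange : Nat.card S = Nat.card (S ⧸ maximalIdeal S) * Nat.card (maximalIdeal S) :=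
    (maximalIdeal S).toAddSubgroup.card_eq_card_quotient_mul_card_addSubgroup
  have : Finite (S ⧸ maximalIdeal S) := Quotient.finite _
  have : (Nat.card (S ⧸ maximalIdeal S) : ℚ) ≠ 0 := Nat.cast_ne_zero.mpr Nat.card_pos.ne'
  rw [count, lagrange]
  field_simp
  push_cast
  ring

end LocalRing

theorem IsLocalRing.card_residueField_quotient {R : Type*} [CommRing R] [IsLocalRing R]
    {I : Ideal R} (hI : I ≠ ⊤) [IsLocalRing (R ⧸ I)] :
    Nat.card ((R ⧸ I) ⧸ maximalIdeal (R ⧸ I)) = Nat.card (R ⧸ maximalIdeal R) := by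
  rw [← map_maximalIdeal_of_surjective _ Ideal.Quotient.mk_surjective]
  exact Nat.card_congr (DoubleQuot.quotQuotEquivQuotOfLE (le_maximalIdeal hI)).toEquiv

/-- In a local ring `R` with maximal ideal `m` and a proper ideal `I` of finite index,
the number of primitive `k`-tuples of `R ⧸ I` is `[R:I]^k · (1 - 1/[R:m]^k)`. -/
theorem card_primitive_tuples_local {R : Type*} [CommRing R] [IsLocalRing R]
    (I : Ideal R) (hI : I ≠ ⊤) [Finite (R ⧸ I)] (k : ℕ) :
    (Nat.card {a : Fin k → R ⧸ I // Ideal.span (Set.range a) = ⊤} : ℚ) =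
      (Nat.card (R ⧸ I) : ℚ) ^ k *
        (1 - 1 / (Nat.card (R ⧸ IsLocalRing.maximalIdeal R) : ℚ) ^ k) := by
  have : Nontrivial (R ⧸ I) := Ideal.Quotient.nontrivial_iff.mpr hI
  have : IsLocalRing (R ⧸ I) := .of_surjective' _ Ideal.Quotient.mk_surjective
  rw [card_primitive_eq, Nat.card_fin, card_residueField_quotient hI]
end

section
/- Let R be a commutative unital ring. The Jordan totient J_{R,k} is multiplicative: if I and I' are ideals with I + I' = R, then J_{R,k}(I·I') = J_{R,k}(I) · J_{R,k}(I'). -/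
/-!
By the Chinese remainder theorem `R ⧸ (I * I') ≃+* R ⧸ I × R ⧸ I'`, and a tuple in a product
ring generates the unit ideal exactly when both of its component tuples do.
-/

open Ideal Set

section PrimitiveTuples

variable {ι R S : Type*}

theorem Ideal.span_range_comp_ringEquiv_eq_top_iff [Semiring R] [Semiring S] (e : R ≃+* S)
    (a : ι → R) : span (range (e ∘ a)) = ⊤ ↔ span (range a) = ⊤ := by
  rw [range_comp, ← map_span, ← comap_symm, comap_eq_top_iff]

theorem Ideal.span_range_prod_eq_top_iff [Semiring R] [Semiring S] (a : ι → R × S) :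
    span (range a) = ⊤ ↔
      span (range (Prod.fst ∘ a)) = ⊤ ∧ span (range (Prod.snd ∘ a)) = ⊤ := by
  rw [ideal_prod_eq (span (range a)), prod_eq_top_iff, map_span, map_span, ← range_comp,
    ← range_comp]
  rfl

theorem Nat.card_primitiveTuples_congr [Semiring R] [Semiring S] (e : R ≃+* S) :
    Nat.card {a : ι → R // span (range a) = ⊤} =
      Nat.card {b : ι → S // span (range b) = ⊤} :=
  Nat.card_congr <| Equiv.subtypeEquiv (Equiv.piCongrRight fun _ ↦ e.toEquiv) fun a ↦
    (span_range_comp_ringEquiv_eq_top_iff e a).symm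

theorem Nat.card_primitiveTuples_prod [Semiring R] [Semiring S] :
    Nat.card {a : ι → R × S // span (range a) = ⊤} =
      Nat.card {a : ι → R // span (range a) = ⊤} *
        Nat.card {b : ι → S // span (range b) = ⊤} := by
  rw [← Nat.card_prod]
  exact Nat.card_congr <|
    (Equiv.subtypeEquiv (Equiv.arrowProdEquivProdArrow _ _ _) span_range_prod_eq_top_iff).trans
      Equiv.subtypeProdEquivProd

end PrimitiveTuples

/-- The Jordan totient `J_{R,k}(I)`, i.e. the number of primitive `k`-tuples of `R ⧸ I`,
is multiplicative on coprime ideals. -/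
theorem jordan_totient_multiplicative {R : Type*} [CommRing R] (k : ℕ)
    (I I' : Ideal R) (h : I + I' = ⊤) :
    Nat.card {a : Fin k → R ⧸ (I * I') // Ideal.span (Set.range a) = ⊤} =
      Nat.card {a : Fin k → R ⧸ I // Ideal.span (Set.range a) = ⊤} *
      Nat.card {a : Fin k → R ⧸ I' // Ideal.span (Set.range a) = ⊤} := by
  have hcoprime : IsCoprime I I' := isCoprime_iff_sup_eq.mpr h
  rw [Nat.card_primitiveTuples_congr (quotientMulEquivQuotientProd I I' hcoprime),
    Nat.card_primitiveTuples_prod]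
end

section
/- Let R be a Dedekind domain and I a nonzero ideal of finite index. Then the cardinality of projective m-space over R/I equals N(I)^m · ∏_{P | I} (1 + 1/N(P) + ⋯ + 1/N(P)^m), where P ranges over primes dividing I. -/
/-!
Units act freely on primitive tuples, so `|ℙᵐ(A)| · |Aˣ|` is the number of primitive
`(m+1)`-tuples over `A`. Both counts are multiplicative along ring isomorphisms
`A ≃+* Π i, B i`, and by the Chinese remainder theorem `R ⧸ I ≃+* Π_{P ∣ I} R ⧸ P^{e_P}`.
Each factor is a finite local ring with maximal ideal `𝔪` and residue field `R ⧸ P`, where a tuple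
is primitive iff some coordinate lies outside `𝔪`, and the units are the elements outside `𝔪`; hence
`|ℙᵐ| = (|A|^{m+1} - |𝔪|^{m+1}) / (|A| - |𝔪|)`, a geometric sum in `|𝔪| / |A| = 1 / N(P)`.
-/

/-- The scaling action of the units on primitive `(m+1)`-tuples of a commutative ring `A`;
naive projective `m`-space over `A` is the quotient by this setoid. -/
def primSetoid (A : Type*) [CommRing A] (m : ℕ) :
    Setoid {a : Fin (m + 1) → A // Ideal.span (Set.range a) = ⊤} where
  r a b := ∃ u : Aˣ, ∀ i, (u : A) * (a : Fin (m + 1) → A) i = (b : Fin (m + 1) → A) i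
  iseqv := by
    constructor
    · intro a; exact ⟨1, fun i => by simp⟩
    · rintro a b ⟨u, h⟩
      exact ⟨u⁻¹, fun i => by rw [← h i, ← mul_assoc, Units.inv_mul, one_mul]⟩
    · rintro a b c ⟨u, h⟩ ⟨v, h'⟩
      exact ⟨v * u, fun i => by rw [Units.val_mul, mul_assoc, h i, h' i]⟩

/-- Naive projective `m`-space over `A`: primitive `(m+1)`-tuples modulo unit scaling. -/
def NaiveProj (A : Type*) [CommRing A] (m : ℕ) := Quotient (primSetoid A m)

section PrimitiveTuples

variable (A : Type*) [CommRing A] (m : ℕ)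

def primitiveTuples : SubMulAction Aˣ (Fin (m + 1) → A) where
  carrier := {a | Ideal.span (Set.range a) = ⊤}
  smul_mem' u a (ha : Ideal.span _ = ⊤) := by
    change Ideal.span (Set.range fun i => (u : A) • a i) = ⊤
    rw [Set.range_smul]
    exact (Submodule.span_smul_eq_of_isUnit _ _ u.isUnit).trans ha

variable {A m}

theorem primitiveTuples.stabilizer_eq_bot (a : primitiveTuples A m) :
    MulAction.stabilizer Aˣ a = ⊥ := by
  refine (Subgroup.eq_bot_iff_forall _).mpr fun u hu => Units.ext ?_
  have hker : Ideal.span (Set.range (a : Fin (m + 1) → A)) ≤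
      LinearMap.ker (LinearMap.mulLeft A ((u : A) - 1)) := by
    rw [Ideal.span_le]
    rintro _ ⟨i, rfl⟩
    have hi : (u : A) * a.1 i = a.1 i := congr_fun (congrArg Subtype.val hu) i
    simp [sub_mul, hi]
  simpa [sub_eq_zero] using hker ((Ideal.eq_top_iff_one _).mp a.2)

def naiveProjEquivOrbitRelQuotient :
    NaiveProj A m ≃ Quotient (MulAction.orbitRel Aˣ (primitiveTuples A m)) :=
  Quotient.congr (Equiv.refl _) fun a b => by
    rw [MulAction.orbitRel_apply, MulAction.mem_orbit_symm]
    simp only [MulAction.mem_orbit_iff, Subtype.ext_iff, SetLike.val_smul, Units.smul_def,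
      funext_iff, Pi.smul_apply, smul_eq_mul]
    rfl

theorem NaiveProj.card_mul_card_units :
    Nat.card (NaiveProj A m) * Nat.card Aˣ = Nat.card (primitiveTuples A m) := by
  rw [Nat.card_congr naiveProjEquivOrbitRelQuotient, ← Nat.card_prod,
    Nat.card_congr (MulAction.selfEquivOrbitsQuotientProd primitiveTuples.stabilizer_eq_bot)]

end PrimitiveTuples

section Products

variable {A : Type*} [CommRing A] {m : ℕ} {ι : Type*} {B : ι → Type*} [∀ i, CommRing (B i)]

theorem Ideal.span_range_eq_top_iff_forall_apply {κ : Type*} [Fintype κ] (a : κ → ∀ i, B i) :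
    Ideal.span (Set.range a) = ⊤ ↔ ∀ i, Ideal.span (Set.range fun k => a k i) = ⊤ := by
  simp only [Ideal.eq_top_iff_one, Ideal.mem_span_range_iff_exists_fun, funext_iff,
    Finset.sum_apply, Pi.mul_apply, Pi.one_apply]
  exact ⟨fun ⟨c, hc⟩ i => ⟨fun k => c k i, hc i⟩, fun h => by
    choose c hc using h; exact ⟨fun k i => c i k, hc⟩⟩

theorem Ideal.span_range_comp_ringEquiv_eq_top_iff_s8 {A' : Type*} [CommRing A'] {κ : Type*}
    (e : A ≃+* A') (a : κ → A) :
    Ideal.span (Set.range (e ∘ a)) = ⊤ ↔ Ideal.span (Set.range a) = ⊤ := by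
  rw [Set.range_comp, ← Ideal.map_span, ← Ideal.comap_symm, Ideal.comap_eq_top_iff]

def primitiveTuplesEquivPi (e : A ≃+* ∀ i, B i) :
    primitiveTuples A m ≃ ∀ i, primitiveTuples (B i) m where
  toFun a i := ⟨fun k => e (a.1 k) i,
    (Ideal.span_range_eq_top_iff_forall_apply _).mp
      ((Ideal.span_range_comp_ringEquiv_eq_top_iff_s8 e a.1).mpr a.2) i⟩
  invFun b := ⟨fun k => e.symm fun i => (b i).1 k, by
    change Ideal.span _ = ⊤
    rw [← Ideal.span_range_comp_ringEquiv_eq_top_iff_s8 e]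
    simpa [Function.comp_def] using
      (Ideal.span_range_eq_top_iff_forall_apply _).mpr fun i => (b i).2⟩
  left_inv a := by ext; simp
  right_inv b := by ext; simp

theorem NaiveProj.card_eq_prod_of_ringEquiv [Finite A] [Fintype ι] (e : A ≃+* ∀ i, B i) :
    Nat.card (NaiveProj A m) = ∏ i, Nat.card (NaiveProj (B i) m) := by
  have hunits : Nat.card Aˣ = ∏ i, Nat.card (B i)ˣ := by
    rw [Nat.card_congr ((Units.mapEquiv e.toMulEquiv).trans MulEquiv.piUnits).toEquiv,
      Nat.card_pi]
  refine Nat.eq_of_mul_eq_mul_right (Nat.card_pos (α := Aˣ)) ?_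
  rw [NaiveProj.card_mul_card_units, Nat.card_congr (primitiveTuplesEquivPi e), Nat.card_pi,
    hunits, ← Finset.prod_mul_distrib]
  simp only [NaiveProj.card_mul_card_units]

end Products

theorem Nat.card_subtype_add_card_subtype_not {α : Type*} [Finite α] (p : α → Prop) :
    Nat.card {x // p x} + Nat.card {x // ¬p x} = Nat.card α := by
  classical
  rw [← Nat.card_sum, Nat.card_congr (Equiv.sumCompl p)]

section IsLocalRing

open IsLocalRing

variable {A : Type*} [CommRing A] [IsLocalRing A] [Finite A] (m : ℕ)

theorem IsLocalRing.card_units_add_card_maximalIdeal :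
    Nat.card Aˣ + Nat.card (maximalIdeal A) = Nat.card A := by
  have hunits : Nat.card Aˣ = Nat.card {x : A // ¬x ∈ maximalIdeal A} := by
    simp_rw [notMem_maximalIdeal]
    exact (Nat.card_range_of_injective Units.val_injective).symm
  rw [hunits, add_comm]
  exact Nat.card_subtype_add_card_subtype_not _

theorem IsLocalRing.card_primitiveTuples_add_card_maximalIdeal_pow :
    Nat.card (primitiveTuples A m) + Nat.card (maximalIdeal A) ^ (m + 1) =
      Nat.card A ^ (m + 1) := by
  have hnot : ∀ a : Fin (m + 1) → A,
      ¬Ideal.span (Set.range a) = ⊤ ↔ ∀ i, a i ∈ maximalIdeal A := fun a => by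
    have hle : Ideal.span (Set.range a) ≤ maximalIdeal A ↔ ∀ i, a i ∈ maximalIdeal A :=
      Ideal.span_le.trans Set.range_subset_iff
    rw [← hle]
    exact ⟨le_maximalIdeal, fun h htop =>
      (maximalIdeal.isMaximal A).ne_top (top_le_iff.mp (htop ▸ h))⟩
  have hcompl : Nat.card {a : Fin (m + 1) → A // ¬Ideal.span (Set.range a) = ⊤} =
      Nat.card (maximalIdeal A) ^ (m + 1) := by
    rw [Nat.card_congr ((Equiv.subtypeEquivRight hnot).trans (Equiv.subtypePiEquivPi)),
      Nat.card_pi, Finset.prod_const, Finset.card_univ, Fintype.card_fin]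
  have hall : Nat.card (Fin (m + 1) → A) = Nat.card A ^ (m + 1) := by
    rw [Nat.card_fun, Nat.card_fin]
  rw [← hcompl, ← hall]
  exact Nat.card_subtype_add_card_subtype_not _

theorem NaiveProj.card_of_isLocalRing :
    (Nat.card (NaiveProj A m) : ℚ) =
      Nat.card A ^ m * ∑ j ∈ Finset.range (m + 1), 1 / (Nat.card (ResidueField A) : ℚ) ^ j := by
  have hcard : (Nat.card A : ℚ) = Nat.card (maximalIdeal A) * Nat.card (ResidueField A) := by
    exact_mod_cast Submodule.card_eq_card_quotient_mul_card (maximalIdeal A)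
  have hq : (Nat.card (ResidueField A) : ℚ) ≠ 0 :=
    right_ne_zero_of_mul (hcard ▸ Nat.cast_ne_zero.mpr Nat.card_pos.ne')
  have hunits : (Nat.card Aˣ : ℚ) = Nat.card A - Nat.card (maximalIdeal A) := by
    rw [eq_sub_iff_add_eq]
    exact_mod_cast card_units_add_card_maximalIdeal
  have hprim : (Nat.card (primitiveTuples A m) : ℚ) =
      Nat.card A ^ (m + 1) - Nat.card (maximalIdeal A) ^ (m + 1) := by
    rw [eq_sub_iff_add_eq]
    exact_mod_cast card_primitiveTuples_add_card_maximalIdeal_pow m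
  have hk : (Nat.card (maximalIdeal A) : ℚ) = Nat.card A * (1 / Nat.card (ResidueField A)) := by
    rw [hcard, mul_one_div, mul_div_cancel_right₀ _ hq]
  have hunits0 : (Nat.card Aˣ : ℚ) ≠ 0 := by exact_mod_cast Nat.card_pos.ne'
  refine mul_right_cancel₀ hunits0 ?_
  rw [← Nat.cast_mul, NaiveProj.card_mul_card_units, hprim, hunits, hk]
  simp only [← one_div_pow]
  linear_combination -(Nat.card A : ℚ) ^ (m + 1) *
    mul_neg_geom_sum (1 / (Nat.card (ResidueField A) : ℚ)) (m + 1)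

end IsLocalRing

section QuotientPow

open IsLocalRing Ideal.Quotient

variable {R : Type*} [CommRing R] (P : Ideal R) [P.IsMaximal] {n : ℕ}

theorem Ideal.isLocalRing_quotient_pow (hn : n ≠ 0) : IsLocalRing (R ⧸ P ^ n) := by
  have : Nontrivial (R ⧸ P ^ n) := Ideal.Quotient.nontrivial_iff.mpr <| by
    simp [Ideal.pow_eq_top_iff, hn, Ideal.IsMaximal.ne_top ‹_›]
  refine .of_isUnit_or_isUnit_one_sub_self fun x => ?_
  obtain ⟨r, rfl⟩ := mk_surjective x
  rw [← map_one (mk _), ← map_sub, isUnit_mk_pow_iff_notMem P hn, isUnit_mk_pow_iff_notMem P hn,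
    ← not_and_or]
  exact fun h => Ideal.IsMaximal.ne_top ‹_› <| (P.eq_top_iff_one).mpr <| by
    simpa using P.add_mem h.1 h.2

theorem Ideal.maximalIdeal_quotient_pow [IsLocalRing (R ⧸ P ^ n)] (hn : n ≠ 0) :
    maximalIdeal (R ⧸ P ^ n) = P.map (mk (P ^ n)) := by
  ext x
  obtain ⟨r, rfl⟩ := mk_surjective x
  rw [mem_maximalIdeal, mem_nonunits_iff, isUnit_mk_pow_iff_notMem P hn, not_not,
    Ideal.mem_quotient_iff_mem (Ideal.pow_le_self hn)]

theorem Ideal.card_residueField_quotient_pow [IsLocalRing (R ⧸ P ^ n)] (hn : n ≠ 0) :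
    Nat.card (IsLocalRing.ResidueField (R ⧸ P ^ n)) = Nat.card (R ⧸ P) :=
  Nat.card_congr ((Ideal.quotEquivOfEq (P.maximalIdeal_quotient_pow hn)).trans
    (DoubleQuot.quotQuotEquivQuotOfLE (Ideal.pow_le_self hn))).toEquiv

end QuotientPow

open UniqueFactorizationMonoid in
theorem card_proj_space_quotient_dedekind_general {R : Type*} [CommRing R]
    [IsDedekindDomain R] (I : Ideal R) (hI : I ≠ ⊥) [Finite (R ⧸ I)] (m : ℕ)
    (S : Finset (Ideal R)) (hS : ∀ P : Ideal R, P ∈ S ↔ P.IsPrime ∧ I ≤ P) :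
    (Nat.card (NaiveProj (R ⧸ I) m) : ℚ) =
      (Nat.card (R ⧸ I) : ℚ) ^ m *
        ∏ P ∈ S, ∑ j ∈ Finset.range (m + 1), 1 / (Nat.card (R ⧸ P) : ℚ) ^ j := by
  obtain rfl : S = (factors I).toFinset := by
    ext P
    rw [hS, factors_eq_normalizedFactors, Multiset.mem_toFinset,
      Ideal.mem_normalizedFactors_iff hI]
  set e := IsDedekindDomain.quotientEquivPiFactors hI
  rw [NaiveProj.card_eq_prod_of_ringEquiv e, Nat.card_congr e.toEquiv, Nat.card_pi,
    ← Finset.prod_coe_sort (factors I).toFinset, Nat.cast_prod, Nat.cast_prod, ← Finset.prod_pow,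
    ← Finset.prod_mul_distrib]
  refine Finset.prod_congr rfl fun P _ => ?_
  have hP : Prime (P : Ideal R) := prime_of_factor _ (Multiset.mem_toFinset.mp P.2)
  have : (P : Ideal R).IsMaximal :=
    (Ideal.isPrime_of_prime hP).isMaximal hP.ne_zero
  have hcount : Multiset.count (P : Ideal R) (factors I) ≠ 0 :=
    Multiset.count_ne_zero.mpr (Multiset.mem_toFinset.mp P.2)
  have := Ideal.isLocalRing_quotient_pow (P : Ideal R) hcount
  have : Finite (R ⧸ (P : Ideal R) ^ Multiset.count (P : Ideal R) (factors I)) :=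
    .of_surjective _ ((Function.surjective_eval P).comp e.surjective)
  rw [NaiveProj.card_of_isLocalRing, Ideal.card_residueField_quotient_pow (P : Ideal R) hcount]

/-- For a Dedekind domain `R` and a nonzero ideal `I` of finite index, the cardinality of
projective `m`-space over `R ⧸ I` is `N(I)^m · ∏_{P ∣ I} (1 + 1/N(P) + ⋯ + 1/N(P)^m)`. -/
theorem card_proj_space_quotient_dedekind {R : Type*} [CommRing R] [IsDomain R]
    [IsDedekindDomain R] (I : Ideal R) (hI : I ≠ ⊥) [Finite (R ⧸ I)] (m : ℕ)
    (S : Finset (Ideal R)) (hS : ∀ P : Ideal R, P ∈ S ↔ P.IsPrime ∧ I ≤ P) :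
    (Nat.card (NaiveProj (R ⧸ I) m) : ℚ) =
      (Nat.card (R ⧸ I) : ℚ) ^ m *
        ∏ P ∈ S, ∑ j ∈ Finset.range (m + 1), 1 / (Nat.card (R ⧸ P) : ℚ) ^ j :=
  card_proj_space_quotient_dedekind_general I hI m S hS
end

section
/- Let F₀,…,F_M be homogeneous forms of degree d ≥ 0 in variables X₀,…,X_m over a field K with no nontrivial common zero over the algebraic closure. Then there exists an integer e ≥ 0 and homogeneous forms G_{ij} of degree e - d over K such that Σ_{j=0}^{M} G_{ij}·F_j = X_i^e for all i = 0,…,m. -/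
/-!
By the Nullstellensatz over `K̄`, the radical of `I = (F₀, …, F_M) ⊆ K[X₀, …, X_m]` is the ideal
of polynomials vanishing on the common zeros of the `Fⱼ` in `K̄^(m+1)`, i.e. at the origin
only; so it contains every `Xᵢ`, and some common power `e ≥ d` puts all `Xᵢ^e` in `I`.
Writing `Xᵢ^e = ∑ⱼ cᵢⱼ Fⱼ` and keeping only the degree-`(e - d)` parts of the `cᵢⱼ` preserves
the identity, because the `Fⱼ` are homogeneous of degree `d`.
-/

open MvPolynomial

theorem Ideal.exists_pow_mem_of_forall_mem_radical {R ι : Type*} [CommSemiring R] [Finite ι]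
    {I : Ideal R} {x : ι → R} (hx : ∀ i, x i ∈ I.radical) (k : ℕ) :
    ∃ e, k ≤ e ∧ ∀ i, x i ^ e ∈ I := by
  choose n hn using hx
  obtain ⟨N, hN⟩ := (Set.finite_range n).bddAbove
  exact ⟨max k N, le_max_left _ _, fun i ↦
    I.pow_mem_of_pow_mem (hn i) ((hN ⟨i, rfl⟩).trans (le_max_right _ _))⟩

theorem MvPolynomial.X_mem_radical_of_zeroLocus_subset_zero {k K σ : Type*} [Field k] [Field K]
    [Algebra k K] [IsAlgClosed K] [Finite σ] {I : Ideal (MvPolynomial σ k)}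
    (h : zeroLocus K I ⊆ {0}) (i : σ) : X i ∈ I.radical := by
  rw [← vanishingIdeal_zeroLocus_eq_radical (K := K), mem_vanishingIdeal_iff]
  intro x hx
  rw [h hx, aeval_X, Pi.zero_apply]

theorem DirectSum.exists_homogeneous_combination_of_mem_span {ι R A κ : Type*} [DecidableEq ι]
    [AddCommMonoid ι] [PartialOrder ι] [CanonicallyOrderedAdd ι] [Sub ι] [OrderedSub ι]
    [AddLeftReflectLE ι] [CommSemiring R] [CommSemiring A] [Algebra R A]
    (𝒜 : ι → Submodule R A) [GradedAlgebra 𝒜] [Fintype κ] {F : κ → A} {d n : ι}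
    (hF : ∀ j, F j ∈ 𝒜 d) (hdn : d ≤ n) {a : A} (ha : a ∈ 𝒜 n)
    (h : a ∈ Ideal.span (Set.range F)) :
    ∃ G : κ → A, (∀ j, G j ∈ 𝒜 (n - d)) ∧ ∑ j, G j * F j = a := by
  obtain ⟨c, rfl⟩ := Ideal.mem_span_range_iff_exists_fun.mp h
  refine ⟨fun j ↦ decompose 𝒜 (c j) (n - d), fun j ↦ SetLike.coe_mem _, ?_⟩
  calc ∑ j, (decompose 𝒜 (c j) (n - d) : A) * F j
      = ∑ j, (decompose 𝒜 (c j * F j) n : A) := by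
        simp only [coe_decompose_mul_of_right_mem_of_le 𝒜 (hF _) hdn]
    _ = decompose 𝒜 (∑ j, c j * F j) n := by
        rw [decompose_sum, sum_apply, Submodule.coe_sum]
    _ = ∑ j, c j * F j := decompose_of_mem_same 𝒜 ha

attribute [local instance] MvPolynomial.gradedAlgebra in
/-- Existence of a pseudoinverse: if the homogeneous degree-`d` forms `F₀, …, F_M` have no
nontrivial common zero over the algebraic closure, then there are an integer `e ≥ 0` and
homogeneous forms `G_{ij}` of degree `e - d` with `∑_j G_{ij}·F_j = X_i^e` for all `i`. -/
theorem exists_pseudoinverse {K : Type*} [Field K] (m M d : ℕ)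
    (F : Fin (M + 1) → MvPolynomial (Fin (m + 1)) K)
    (hF : ∀ j, (F j).IsHomogeneous d)
    (hz : ∀ x : Fin (m + 1) → AlgebraicClosure K,
      (∀ j, MvPolynomial.aeval x (F j) = 0) → x = 0) :
    ∃ (e : ℕ) (G : Fin (m + 1) → Fin (M + 1) → MvPolynomial (Fin (m + 1)) K),
      (∀ i j, (G i j).IsHomogeneous (e - d)) ∧
      ∀ i, ∑ j, G i j * F j = MvPolynomial.X i ^ e := by
  classical
  have hzero : zeroLocus (AlgebraicClosure K) (Ideal.span (Set.range F)) ⊆ {0} := by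
    intro x hx
    rw [zeroLocus_span] at hx
    exact hz x fun j ↦ hx _ ⟨j, rfl⟩
  obtain ⟨e, hde, he⟩ := Ideal.exists_pow_mem_of_forall_mem_radical
    (X_mem_radical_of_zeroLocus_subset_zero hzero) d
  choose G hG hGF using fun i ↦ DirectSum.exists_homogeneous_combination_of_mem_span
    (homogeneousSubmodule (Fin (m + 1)) K) hF hde (isHomogeneous_X_pow i e) (he i)
  exact ⟨e, G, hG, hGF⟩
end

section
/- Let K be a field with discrete valuation v and let f : P^m → P^M be a morphism of degree d over K with lift F. Define the excess valuation ε_f(x) = v(F(x)) - d·v(x) - v(F) for x ∈ K^{m+1} \ {0}. Then ε_f is independent of the choice of lift F, invariant under scaling x by K^×, non-negative, and bounded above: ε_f(x) ≤ -(v(F) + v(G)) for any pseudoinverse G of F. -/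
/-- The valuation of a tuple: the minimum valuation of its entries. -/
noncomputable def vTup {K : Type*} [Field K] {k : ℕ} (v : AddValuation K (WithTop ℤ))
    (x : Fin k → K) : WithTop ℤ :=
  Finset.univ.inf fun i => v (x i)

/-- The valuation of a polynomial: the minimum valuation of its coefficients. -/
noncomputable def vPoly {K : Type*} [Field K] {σ : Type*} (v : AddValuation K (WithTop ℤ))
    (p : MvPolynomial σ K) : WithTop ℤ :=
  p.support.inf fun s => v (MvPolynomial.coeff s p)

/-- The valuation of a system of polynomials: the minimum valuation of all coefficients. -/
noncomputable def vSys {K : Type*} [Field K] {k : ℕ} {σ : Type*}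
    (v : AddValuation K (WithTop ℤ)) (F : Fin k → MvPolynomial σ K) : WithTop ℤ :=
  Finset.univ.inf fun j => vPoly v (F j)

/-!
Every quantity scales additively: multiplying the lift by `λ` or the point by `c` shifts each
valuation by `v λ` resp. `d • v c`, which gives the two invariances. Non-negativity is the
ultrametric inequality applied monomial by monomial to `F j (x)`. For the upper bound pick a
coordinate with `v (x i) = v x`; then `e • v x = v (x i ^ e) = v (∑ j, G i j (x) F j (x))`, and the
ultrametric inequality together with non-negativity for `G` bounds this below by
`(e - d) • v x + v G + v (F x)`; cancelling `(e - d) • v x`, finite as `x ≠ 0`, leaves the claim.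
-/

open MvPolynomial Finset

lemma WithTop.add_finset_inf {α ι : Type*} [LinearOrder α] [AddCommMonoid α]
    [IsOrderedAddMonoid α] (s : Finset ι) (c : WithTop α) (f : ι → WithTop α) :
    c + s.inf f = s.inf fun i => c + f i :=
  apply_inf_eq_inf_comp_of_linearOrder (c + ·) (fun _ _ h => add_le_add_right h c) (add_top c)

lemma WithTop.nsmul_ne_top {α : Type*} [AddMonoid α] {t : WithTop α} (ht : t ≠ ⊤) (n : ℕ) :
    n • t ≠ ⊤ := by
  lift t to α using ht
  exact_mod_cast WithTop.coe_ne_top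

lemma AddValuation.map_prod {R Γ₀ ι : Type*} [CommRing R] [LinearOrderedAddCommMonoidWithTop Γ₀]
    (v : AddValuation R Γ₀) (s : Finset ι) (f : ι → R) :
    v (∏ i ∈ s, f i) = ∑ i ∈ s, v (f i) := by
  induction s using Finset.cons_induction with
  | empty => simp
  | cons a s _ ih => rw [prod_cons, sum_cons, v.map_mul, ih]

namespace MvPolynomial.IsHomogeneous

variable {R σ : Type*} [CommSemiring R] {p : MvPolynomial σ R} {n : ℕ}

lemma sum_eq_of_mem_support [Fintype σ] (hp : p.IsHomogeneous n) {s : σ →₀ ℕ}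
    (hs : s ∈ p.support) : ∑ i, s i = n := by
  rw [← Finsupp.degree_eq_sum, Finsupp.degree_eq_weight_one]
  exact hp (mem_support_iff.mp hs)

lemma eval_smul [Fintype σ] (hp : p.IsHomogeneous n) (c : R) (x : σ → R) :
    eval (c • x) p = c ^ n * eval x p := by
  rw [eval_eq', eval_eq', mul_sum]
  refine sum_congr rfl fun s hs => ?_
  simp only [Pi.smul_apply, smul_eq_mul, mul_pow, prod_mul_distrib, prod_pow_eq_pow_sum,
    hp.sum_eq_of_mem_support hs]
  ring

/-- If `e < d`, the degree `e - d` truncates to `0`, so both sides of `h` would be homogeneous,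
of the distinct degrees `d` and `e`. -/
lemma le_of_sum_mul_eq_X_pow [Nontrivial R] {ι : Type*} {s : Finset ι}
    {F G : ι → MvPolynomial σ R} {d e : ℕ} (hF : ∀ j, (F j).IsHomogeneous d)
    (hG : ∀ j, (G j).IsHomogeneous (e - d)) {i : σ} (h : ∑ j ∈ s, G j * F j = X i ^ e) :
    d ≤ e := by
  by_contra! hlt
  have hsum : (∑ j ∈ s, G j * F j).IsHomogeneous d := by
    refine IsHomogeneous.sum _ _ _ fun j _ => ?_
    simpa [Nat.sub_eq_zero_of_le hlt.le] using (hG j).mul (hF j)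
  rw [h] at hsum
  have := hsum.inj_right (isHomogeneous_X_pow i e) (by simp [X_pow_eq_monomial])
  omega

end MvPolynomial.IsHomogeneous

section Valuation

variable {K : Type*} [Field K] (v : AddValuation K (WithTop ℤ)) {k l : ℕ}

lemma vTup_le (x : Fin k → K) (i : Fin k) : vTup v x ≤ v (x i) :=
  inf_le (mem_univ i)

lemma exists_vTup_eq [NeZero k] (x : Fin k → K) : ∃ i, vTup v x = v (x i) := by
  obtain ⟨i, -, hi⟩ := exists_mem_eq_inf univ univ_nonempty fun i => v (x i)
  exact ⟨i, hi⟩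

lemma vTup_ne_top {x : Fin k → K} (hx : x ≠ 0) : vTup v x ≠ ⊤ := by
  obtain ⟨i, hi⟩ := Function.ne_iff.mp hx
  exact ne_top_of_le_ne_top ((v.ne_top_iff).mpr hi) (vTup_le v x i)

lemma vTup_mul_left (c : K) (x : Fin k → K) :
    vTup v (fun i => c * x i) = v c + vTup v x := by
  simp only [vTup, v.map_mul, WithTop.add_finset_inf]

lemma vTup_smul (c : K) (x : Fin k → K) : vTup v (c • x) = v c + vTup v x :=
  vTup_mul_left v c x

lemma vPoly_C_mul {σ : Type*} {c : K} (hc : c ≠ 0) (p : MvPolynomial σ K) :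
    vPoly v (C c * p) = v c + vPoly v p := by
  have hsupp : (C c * p).support = p.support := by
    ext s
    simp [mem_support_iff, coeff_C_mul, hc]
  simp only [vPoly, hsupp, coeff_C_mul, v.map_mul, WithTop.add_finset_inf]

lemma vSys_C_mul {σ : Type*} {c : K} (hc : c ≠ 0) (F : Fin k → MvPolynomial σ K) :
    vSys v (fun j => C c * F j) = v c + vSys v F := by
  simp only [vSys, vPoly_C_mul v hc, WithTop.add_finset_inf]

lemma le_val_eval_of_isHomogeneous {p : MvPolynomial (Fin k) K} {n : ℕ}
    (hp : p.IsHomogeneous n) (x : Fin k → K) :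
    n • vTup v x + vPoly v p ≤ v (eval x p) := by
  rw [eval_eq']
  refine v.map_le_sum fun s hs => ?_
  have hmonomial : n • vTup v x ≤ v (∏ i, x i ^ s i) :=
    calc n • vTup v x = ∑ i, s i • vTup v x := by rw [← sum_smul, hp.sum_eq_of_mem_support hs]
      _ ≤ ∑ i, s i • v (x i) := sum_le_sum fun i _ => nsmul_le_nsmul_right (vTup_le v x i) _
      _ = v (∏ i, x i ^ s i) := by simp only [v.map_prod, v.map_pow]
  rw [v.map_mul, add_comm (v _)]
  exact add_le_add hmonomial (inf_le hs)

variable {d : ℕ} {F : Fin l → MvPolynomial (Fin k) K}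

lemma le_vTup_eval (hF : ∀ j, (F j).IsHomogeneous d) (x : Fin k → K) :
    d • vTup v x + vSys v F ≤ vTup v fun j => eval x (F j) :=
  Finset.le_inf fun j _ =>
    (add_le_add_right (inf_le (mem_univ j)) _).trans (le_val_eval_of_isHomogeneous v (hF j) x)

lemma vTup_eval_smul (hF : ∀ j, (F j).IsHomogeneous d) (c : K) (x : Fin k → K) :
    (vTup v fun j => eval (c • x) (F j)) = d • v c + vTup v fun j => eval x (F j) := by
  simp only [(hF _).eval_smul, ← v.map_pow, vTup_mul_left]

lemma vTup_eval_add_le_of_pseudoinverse [NeZero k] (hF : ∀ j, (F j).IsHomogeneous d) {e : ℕ}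
    {G : Fin k → Fin l → MvPolynomial (Fin k) K} (hG : ∀ i j, (G i j).IsHomogeneous (e - d))
    (hGF : ∀ i, ∑ j, G i j * F j = X i ^ e) {x : Fin k → K} (hx : x ≠ 0) :
    (vTup v fun j => eval x (F j)) + (univ.inf fun p : Fin k × Fin l => vPoly v (G p.1 p.2)) ≤
      d • vTup v x := by
  obtain ⟨i, hi⟩ := exists_vTup_eq v x
  have hde : d ≤ e := IsHomogeneous.le_of_sum_mul_eq_X_pow hF (hG i) (hGF i)
  have hGi : (univ.inf fun p : Fin k × Fin l => vPoly v (G p.1 p.2)) ≤ vSys v (G i) :=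
    Finset.le_inf fun j _ => inf_le (mem_univ (i, j))
  have hkey : (e - d) • vTup v x + ((univ.inf fun p : Fin k × Fin l => vPoly v (G p.1 p.2)) +
      vTup v fun j => eval x (F j)) ≤ (e - d) • vTup v x + d • vTup v x :=
    calc _ ≤ v (eval x (∑ j, G i j * F j)) := by
          rw [map_sum]
          refine v.map_le_sum fun j _ => ?_
          rw [map_mul, v.map_mul, ← add_assoc]
          refine add_le_add ?_ (vTup_le v _ j)
          calc _ ≤ (e - d) • vTup v x + vSys v (G i) := add_le_add_right hGi _
            _ ≤ vTup v (fun j => eval x (G i j)) := le_vTup_eval v (hG i) x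
            _ ≤ _ := vTup_le v _ j
      _ = (e - d) • vTup v x + d • vTup v x := by
          rw [hGF i, map_pow, eval_X, v.map_pow, ← hi, ← add_nsmul, Nat.sub_add_cancel hde]
  rw [add_comm]
  exact (WithTop.add_le_add_iff_left (WithTop.nsmul_ne_top (vTup_ne_top v hx) _)).mp hkey

end Valuation

theorem excess_valuation_properties_general {K : Type*} [Field K] (m M d : ℕ)
    (v : AddValuation K (WithTop ℤ))
    (F : Fin (M + 1) → MvPolynomial (Fin (m + 1)) K)
    (hF : ∀ j, (F j).IsHomogeneous d)
    (x : Fin (m + 1) → K) (hx : x ≠ 0) :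
    -- lift-independence: `v((λF)(x)) - v(λF) = v(F(x)) - v(F)`
    (∀ lam : K, lam ≠ 0 →
      vTup v (fun j => MvPolynomial.eval x (MvPolynomial.C lam * F j)) + vSys v F =
        vTup v (fun j => MvPolynomial.eval x (F j)) +
          vSys v (fun j => MvPolynomial.C lam * F j)) ∧
    -- scale-invariance: `v(F(cx)) - d·v(cx) = v(F(x)) - d·v(x)`
    (∀ c : K, c ≠ 0 →
      vTup v (fun j => MvPolynomial.eval (c • x) (F j)) + d • vTup v x =
        vTup v (fun j => MvPolynomial.eval x (F j)) + d • vTup v (c • x)) ∧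
    -- non-negativity: `v(F(x)) ≥ d·v(x) + v(F)`
    (d • vTup v x + vSys v F ≤ vTup v (fun j => MvPolynomial.eval x (F j))) ∧
    -- boundedness: `v(F(x)) + v(G) ≤ d·v(x)` for every pseudoinverse `G`
    (∀ (e : ℕ) (G : Fin (m + 1) → Fin (M + 1) → MvPolynomial (Fin (m + 1)) K),
      (∀ i j, (G i j).IsHomogeneous (e - d)) →
      (∀ i, ∑ j, G i j * F j = MvPolynomial.X i ^ e) →
      vTup v (fun j => MvPolynomial.eval x (F j)) +
          (Finset.univ.inf fun p : Fin (m + 1) × Fin (M + 1) => vPoly v (G p.1 p.2)) ≤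
        d • vTup v x) := by
  refine ⟨fun lam hlam => ?_, fun c _ => ?_, le_vTup_eval v hF x,
    fun e G hG hGF => vTup_eval_add_le_of_pseudoinverse v hF hG hGF hx⟩
  · simp only [map_mul, eval_C, vTup_mul_left, vSys_C_mul v hlam]
    abel
  · rw [vTup_eval_smul v hF, vTup_smul, nsmul_add]
    abel

/-- The excess valuation `ε_f(x) = v(F(x)) - d·v(x) - v(F)` of a morphism (here expressed in
subtraction-free form, all quantities being finite) is independent of the lift, invariant
under scaling `x`, non-negative, and bounded above by `-(v(F) + v(G))` for any
pseudoinverse `G`. -/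
theorem excess_valuation_properties {K : Type*} [Field K] (m M d : ℕ)
    (v : AddValuation K (WithTop ℤ))
    (F : Fin (M + 1) → MvPolynomial (Fin (m + 1)) K)
    (hF : ∀ j, (F j).IsHomogeneous d)
    (hmor : ∀ z : Fin (m + 1) → AlgebraicClosure K,
      (∀ j, MvPolynomial.aeval z (F j) = 0) → z = 0)
    (x : Fin (m + 1) → K) (hx : x ≠ 0) :
    -- lift-independence: `v((λF)(x)) - v(λF) = v(F(x)) - v(F)`
    (∀ lam : K, lam ≠ 0 →
      vTup v (fun j => MvPolynomial.eval x (MvPolynomial.C lam * F j)) + vSys v F =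
        vTup v (fun j => MvPolynomial.eval x (F j)) +
          vSys v (fun j => MvPolynomial.C lam * F j)) ∧
    -- scale-invariance: `v(F(cx)) - d·v(cx) = v(F(x)) - d·v(x)`
    (∀ c : K, c ≠ 0 →
      vTup v (fun j => MvPolynomial.eval (c • x) (F j)) + d • vTup v x =
        vTup v (fun j => MvPolynomial.eval x (F j)) + d • vTup v (c • x)) ∧
    -- non-negativity: `v(F(x)) ≥ d·v(x) + v(F)`
    (d • vTup v x + vSys v F ≤ vTup v (fun j => MvPolynomial.eval x (F j))) ∧
    -- boundedness: `v(F(x)) + v(G) ≤ d·v(x)` for every pseudoinverse `G`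
    (∀ (e : ℕ) (G : Fin (m + 1) → Fin (M + 1) → MvPolynomial (Fin (m + 1)) K),
      (∀ i j, (G i j).IsHomogeneous (e - d)) →
      (∀ i, ∑ j, G i j * F j = MvPolynomial.X i ^ e) →
      vTup v (fun j => MvPolynomial.eval x (F j)) +
          (Finset.univ.inf fun p : Fin (m + 1) × Fin (M + 1) => vPoly v (G p.1 p.2)) ≤
        d • vTup v x) :=
  excess_valuation_properties_general m M d v F hF x hx
end

section
/- Let K be a field with discrete valuation v, O its valuation ring, and f a morphism P^m → P^M of degree d with excess valuation ε_f. If x, y are v-normalized points (v(x) = v(y) = 0) with v(x - y) ≥ sup_{z ≠ 0} ε_f(z), then ε_f(x) = ε_f(y). -/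
/-!
Write `x ≡ y (mod c)` for `c ≤ v(x - y)`. Among integral elements this congruence is
multiplicative, so evaluating a polynomial at two integral points that are congruent mod `c`
gives values congruent mod `c + v(F)`. If `v(x) = v(y) = 0` and `c = B`, the hypothesis bounds
`v(F(x))` and `v(F(y))` by `v(F) + B`, so `F(x) - F(y)` is too small to change the minimum
valuation of the coordinates, by the ultrametric inequality.
-/

namespace AddValuation

variable {R Γ₀ : Type*} [CommRing R] [LinearOrderedAddCommMonoidWithTop Γ₀]
  (v : AddValuation R Γ₀)

def integralCongrSubmonoid (c : Γ₀) : Submonoid (R × R) where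
  carrier := {p | 0 ≤ v p.1 ∧ 0 ≤ v p.2 ∧ c ≤ v (p.1 - p.2)}
  one_mem' := by simp
  mul_mem' := by
    rintro ⟨a, b⟩ ⟨a', b'⟩ ⟨ha, hb, hab⟩ ⟨ha', hb', hab'⟩
    refine ⟨by simpa using add_nonneg ha ha', by simpa using add_nonneg hb hb', ?_⟩
    have hsplit : a * a' - b * b' = a * (a' - b') + (a - b) * b' := by ring
    show c ≤ v (a * a' - b * b')
    rw [hsplit]
    refine v.map_le_add ?_ ?_ <;> rw [v.map_mul]
    · simpa using add_le_add ha hab'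
    · simpa using add_le_add hab hb'

theorem le_map_prod_pow_sub_prod_pow {ι : Type*} (s : Finset ι) (n : ι → ℕ) (x y : ι → R)
    (c : Γ₀) (hxy : ∀ i ∈ s, (x i, y i) ∈ v.integralCongrSubmonoid c) :
    c ≤ v (∏ i ∈ s, x i ^ n i - ∏ i ∈ s, y i ^ n i) := by
  have hmem : ∏ i ∈ s, (x i, y i) ^ n i ∈ v.integralCongrSubmonoid c :=
    Submonoid.prod_mem _ fun i hi => Submonoid.pow_mem _ (hxy i hi) _
  simpa only [Prod.fst_prod, Prod.snd_prod, Prod.pow_fst, Prod.pow_snd] using hmem.2.2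

end AddValuation

section ExcessValuation

variable {K : Type*} [Field K] (v : AddValuation K (WithTop ℤ))

theorem vTup_zero {k : ℕ} : vTup v (0 : Fin k → K) = ⊤ := by
  simp [vTup]

theorem mem_integralCongrSubmonoid_of_vTup_eq_zero {k : ℕ} {x y : Fin k → K}
    (hx : vTup v x = 0) (hy : vTup v y = 0) (i : Fin k) :
    (x i, y i) ∈ v.integralCongrSubmonoid (vTup v fun i => x i - y i) :=
  ⟨hx ▸ Finset.inf_le (Finset.mem_univ i), hy ▸ Finset.inf_le (Finset.mem_univ i),
    Finset.inf_le (f := fun i => v (x i - y i)) (Finset.mem_univ i)⟩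

theorem vPoly_add_le_map_eval_sub_eval {σ : Type*} [Fintype σ] (p : MvPolynomial σ K)
    (x y : σ → K) (c : WithTop ℤ) (hxy : ∀ i, (x i, y i) ∈ v.integralCongrSubmonoid c) :
    vPoly v p + c ≤ v (MvPolynomial.eval x p - MvPolynomial.eval y p) := by
  rw [MvPolynomial.eval_eq' x p, MvPolynomial.eval_eq' y p, ← Finset.sum_sub_distrib]
  refine v.map_le_sum fun s hs => ?_
  rw [← mul_sub, v.map_mul]
  exact add_le_add (Finset.inf_le hs)
    (v.le_map_prod_pow_sub_prod_pow _ s x y c fun i _ => hxy i)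

theorem vTup_le_of_le_map_sub {k : ℕ} {a b : Fin k → K} {c : WithTop ℤ}
    (ha : vTup v a ≤ c) (hab : ∀ j, c ≤ v (a j - b j)) : vTup v a ≤ vTup v b := by
  refine Finset.le_inf fun j _ => ?_
  have hb : b j = a j - (a j - b j) := by ring
  rw [hb]
  exact v.map_le_sub (Finset.inf_le (Finset.mem_univ j)) (ha.trans (hab j))

theorem vTup_eq_of_le_map_sub {k : ℕ} {a b : Fin k → K} {c : WithTop ℤ}
    (ha : vTup v a ≤ c) (hb : vTup v b ≤ c) (hab : ∀ j, c ≤ v (a j - b j)) :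
    vTup v a = vTup v b :=
  le_antisymm (vTup_le_of_le_map_sub v ha hab)
    (vTup_le_of_le_map_sub v hb fun j => by rw [v.map_sub_swap]; exact hab j)

end ExcessValuation

theorem excess_valuation_locally_constant_general {K : Type*} [Field K] (m M d : ℕ)
    (v : AddValuation K (WithTop ℤ)) (B : ℤ)
    (F : Fin (M + 1) → MvPolynomial (Fin (m + 1)) K)
    (hB : ∀ z : Fin (m + 1) → K, z ≠ 0 →
      vTup v (fun j => MvPolynomial.eval z (F j)) ≤ d • vTup v z + vSys v F + (B : WithTop ℤ))
    (x y : Fin (m + 1) → K) (hx : vTup v x = 0) (hy : vTup v y = 0)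
    (hxy : (B : WithTop ℤ) ≤ vTup v (fun i => x i - y i)) :
    vTup v (fun j => MvPolynomial.eval x (F j)) =
      vTup v (fun j => MvPolynomial.eval y (F j)) := by
  have hbound : ∀ z, vTup v z = 0 →
      vTup v (fun j => MvPolynomial.eval z (F j)) ≤ vSys v F + (B : WithTop ℤ) := by
    intro z hz
    have hz0 : z ≠ 0 := by rintro rfl; simp [vTup_zero] at hz
    simpa [hz] using hB z hz0
  refine vTup_eq_of_le_map_sub v (hbound x hx) (hbound y hy) fun j => ?_
  calc vSys v F + (B : WithTop ℤ)
      ≤ vPoly v (F j) + vTup v (fun i => x i - y i) :=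
        add_le_add (Finset.inf_le (Finset.mem_univ j)) hxy
    _ ≤ v (MvPolynomial.eval x (F j) - MvPolynomial.eval y (F j)) :=
        vPoly_add_le_map_eval_sub_eval v _ x y _
          (mem_integralCongrSubmonoid_of_vTup_eq_zero v hx hy)

/-- Local constancy of the excess valuation: if `B` bounds the excess valuation
`ε_f(z) = v(F(z)) - d·v(z) - v(F)` for all `z ≠ 0`, and if `x, y` are `v`-normalized points
with `v(x - y) ≥ B`, then `ε_f(x) = ε_f(y)` (equivalently `v(F(x)) = v(F(y))`). -/
theorem excess_valuation_locally_constant {K : Type*} [Field K] (m M d : ℕ)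
    (v : AddValuation K (WithTop ℤ)) (B : ℤ)
    (F : Fin (M + 1) → MvPolynomial (Fin (m + 1)) K)
    (hF : ∀ j, (F j).IsHomogeneous d)
    (hB : ∀ z : Fin (m + 1) → K, z ≠ 0 →
      vTup v (fun j => MvPolynomial.eval z (F j)) ≤ d • vTup v z + vSys v F + (B : WithTop ℤ))
    (x y : Fin (m + 1) → K) (hx : vTup v x = 0) (hy : vTup v y = 0)
    (hxy : (B : WithTop ℤ) ≤ vTup v (fun i => x i - y i)) :
    vTup v (fun j => MvPolynomial.eval x (F j)) =
      vTup v (fun j => MvPolynomial.eval y (F j)) :=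
  excess_valuation_locally_constant_general m M d v B F hB x y hx hy hxy
end
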